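/- For every l ∈ {1,...,k} and every x ∈ {l+1,...,n}, one has l · c_l(x) = c_{l-1}(x-1) - c_{l-1}(x). -/

import Mathlib

/-! For `l ≥ 2`, `d_l(x)` is `k x! (n-l-x)! / (l (l-1) n!)` times the truncated Vandermonde
convolution `∑_{j < l-1} C(k-1, j) C(n-k, x+l-1-j)`. Applying the absorption identity
`(t+1) C(B, t+1) = (B-t) C(B, t)` to both factors of each term and summing gives a three-term
relation between these truncated sums at consecutive lengths, which is exactly the recurrence
for `l ≥ 3`. For `l = 1` the harmonic sums of `d_0` and `d_1` cancel by Pascal's rule, and for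
`l = 2` the recurrence is a factorial identity. -/

open Finset

namespace Secretary

/-- Binomial coefficient on integers: zero when `b < 0` or `b > a`. -/
noncomputable def Cb (a b : ℤ) : ℝ :=
  if 0 ≤ b ∧ b ≤ a then (Nat.choose a.toNat b.toNat : ℝ) else 0

/-- The value `π(i)` of a permutation of `{1,...,n}` in 1-based indexing. -/
def pv (n : ℕ) (π : Equiv.Perm (Fin n)) (i : ℕ) : ℕ :=
  if h : i - 1 < n then ((π ⟨i - 1, h⟩ : Fin n) : ℕ) + 1 else 0

/-- The relative rank `ρ_π(i)`: the number of `j ∈ {1,...,i}` with `π(j) ≤ π(i)`. -/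
def rho (n : ℕ) (π : Equiv.Perm (Fin n)) (i : ℕ) : ℕ :=
  ((Finset.Icc 1 i).filter fun j => pv n π j ≤ pv n π i).card

/-- Extension of a sequence `s` with `s (k+1) = n - 1`. -/
def sExt (n k : ℕ) (s : ℕ → ℕ) (l : ℕ) : ℕ := if l = k + 1 then n - 1 else s l

/-- `i` is a `(π, l, w)`-element. -/
def IsElem (n k : ℕ) (s : ℕ → ℕ) (π : Equiv.Perm (Fin n)) (l i : ℕ) : Prop :=
  sExt n k s l < i ∧ i ≤ sExt n k s (l + 1) ∧ rho n π i ≤ l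

/-- `l` is a `w`-threshold of `π`. -/
def IsThreshold (n k : ℕ) (s : ℕ → ℕ) (π : Equiv.Perm (Fin n)) (l : ℕ) : Prop :=
  1 ≤ l ∧ l ≤ k ∧ ∃ i, IsElem n k s π l i

open Classical in
/-- `π` is a lucky permutation for the sequence `w = s`. -/
def Lucky (n k : ℕ) (s : ℕ → ℕ) (π : Equiv.Perm (Fin n)) : Prop :=
  if ∃ l, IsThreshold n k s π l then
    pv n π (sInf {i | IsElem n k s π (sInf {l | IsThreshold n k s π l}) i}) ≤ k
  else pv n π n ≤ k

/-- The maps `r_l` (first argument an integer `l ≤ k`). -/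
noncomputable def rr (n k : ℕ) (l : ℤ) (x : ℕ) : ℝ :=
  if l < 0 then 0
  else if l = 0 then
    1 / (x : ℝ) - (k : ℝ) / n - Cb ((n : ℤ) - x - 1) k / ((x : ℝ) * Cb n k)
      - (1 / Cb n k) * ∑ j ∈ Finset.Icc 1 x, Cb ((n : ℤ) - j - 1) ((k : ℤ) - 1) / (j : ℝ)
  else
    ((Nat.factorial (x - l.toNat - 1) : ℝ) / (Nat.factorial x : ℝ)) *
      (1 - (1 / ((l : ℝ) * Cb n x)) *
        ∑ j ∈ Finset.range (l.toNat + 1),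
          ((l : ℝ) - j) * Cb k j * Cb ((n : ℤ) - k) ((x : ℤ) - j))

/-- The constant `δ_{k,n}`. -/
noncomputable def delta (n k : ℕ) : ℝ :=
  if k = 1 then -(1 / (n : ℝ)) * ∑ j ∈ Finset.Icc 1 (n - 1), (1 : ℝ) / j
  else (Nat.factorial (n - k) : ℝ) / (Nat.factorial n : ℝ)

/-- The maps `d_l` for `0 ≤ l ≤ k`. -/
noncomputable def d (n k : ℕ) (l x : ℕ) : ℝ :=
  if l = 0 then
    -1 + (k : ℝ) * x / n + Cb ((n : ℤ) - x - 1) k / Cb n k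
      + ((x : ℝ) / Cb n k) * ∑ j ∈ Finset.Icc 1 x, Cb ((n : ℤ) - j - 1) ((k : ℤ) - 1) / (j : ℝ)
  else if l = 1 then
    -((k : ℝ) / n) - (1 / Cb n k) * ∑ j ∈ Finset.Icc 1 x, Cb ((n : ℤ) - j - 1) ((k : ℤ) - 1) / (j : ℝ)
  else
    ((k : ℝ) * (Nat.factorial x : ℝ) * (Nat.factorial (n - l - x) : ℝ) /
        ((l : ℝ) * ((l : ℝ) - 1) * (Nat.factorial n : ℝ))) *
      ∑ j ∈ Finset.range (l - 1), Cb ((k : ℤ) - 1) j * Cb ((n : ℤ) - k) ((x : ℤ) + l - j - 1)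

/-- The maps `c_l(x) = d_l(x - l)`. -/
noncomputable def c (n k l x : ℕ) : ℝ := d n k l (x - l)

/-- The constant `ξ_{k,n}`. -/
noncomputable def xi (n k : ℕ) : ℝ :=
  (k : ℝ) * (Nat.factorial (n - k - 1) : ℝ) / (Nat.factorial n : ℝ)

/-- `w` (given as a 1-indexed function) is a word in `X^{(k-l)}`, i.e. its `j`-th letter
belongs to `X_{l+j} = {l+j, ..., n-1}` for `1 ≤ j ≤ k - l`. -/
def memX (n k l : ℕ) (w : ℕ → ℕ) : Prop :=
  ∀ j ∈ Finset.Icc 1 (k - l), l + j ≤ w j ∧ w j ≤ n - 1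

/-- The left-shift operator removing the first `l` letters of a word. -/
def shift (l : ℕ) (w : ℕ → ℕ) : ℕ → ℕ := fun j => w (l + j)

/-- The maps `R_{l,j}`. -/
noncomputable def Rmap (n k l : ℕ) (w : ℕ → ℕ) (j : ℕ) : ℝ :=
  if 1 ≤ j ∧ j ≤ k - l then
    rr n k ((l : ℤ) + j - 1) (w j)
      - rr n k ((l : ℤ) + j - 1) (if j = k - l then n - 1 else w (j + 1))
  else 0

/-- The maps `Γ_{l,j,j'}`. -/
noncomputable def Gam (n k l j j' : ℕ) (w : ℕ → ℕ) : ℝ :=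
  if 1 ≤ j ∧ j ≤ j' ∧ j' ≤ k - l then
    ∏ t ∈ Finset.Icc j j', ((w t : ℝ) - l - t + 1)
  else 1

/-- The maps `T_l`. -/
noncomputable def Tmap (n k l : ℕ) (w : ℕ → ℕ) : ℝ :=
  (∑ j ∈ Finset.Icc 1 (k - l), Rmap n k l w j * Gam n k l 1 j w)
    + xi n k * Gam n k l 1 (k - l) w

/-- The maps `D_l(w) = r_{l-1}(x_1) - T_l(w)`, with `x_1 := n-1` when `l = k`. -/
noncomputable def Dmap (n k l : ℕ) (w : ℕ → ℕ) : ℝ :=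
  rr n k ((l : ℤ) - 1) (if l = k then n - 1 else w 1) - Tmap n k l w

/-- The maps `F_{l,w}(x) = -c_{l-1}(x) - x·D_l(w)`. -/
noncomputable def Fmap (n k l : ℕ) (w : ℕ → ℕ) (x : ℕ) : ℝ :=
  -(c n k (l - 1) x) - (x : ℝ) * Dmap n k l w

/-- The maps `a_l`. -/
noncomputable def amap (n k l x : ℕ) : ℝ :=
  (1 / Cb n x) * ∑ j ∈ Finset.range (l + 1), Cb k j * Cb ((n : ℤ) - k) ((x : ℤ) - j)

/-- The maps `b_l`. -/
noncomputable def bmap (n k l x : ℕ) : ℝ :=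
  (1 / ((l : ℝ) * Cb n x)) *
    ∑ j ∈ Finset.range (l + 1), (j : ℝ) * Cb k j * Cb ((n : ℤ) - k) ((x : ℤ) - j)

/-- `π ∈ S(l0, i0)`: `π` is lucky for `s`, `l0` is the smallest `s`-threshold of `π`,
and `i0` is the smallest `(π, l0, s)`-element. -/
def SMem (n k : ℕ) (s : ℕ → ℕ) (l0 i0 : ℕ) (π : Equiv.Perm (Fin n)) : Prop :=
  Lucky n k s π ∧ IsLeast {l | IsThreshold n k s π l} l0 ∧
    IsLeast {i | IsElem n k s π l0 i} i0

/-- `π ∈ S(Y, Y', l0, i0)`. -/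
def SYYMem (n k : ℕ) (s : ℕ → ℕ) (Y Y' : Finset ℕ) (l0 i0 : ℕ) (π : Equiv.Perm (Fin n)) :
    Prop :=
  SMem n k s l0 i0 π ∧ ((Finset.Icc 1 i0).image (pv n π)) ∩ Finset.Icc 1 k = Y ∧
    ((Finset.Icc 1 i0).image (pv n π)) ∩ Finset.Icc (k + 1) n = Y'


open scoped Nat

lemma Cb_natCast (a b : ℕ) : Cb a b = a.choose b := by
  unfold Cb
  split_ifs with h
  · simp
  · rw [Nat.choose_eq_zero_of_lt (by omega), Nat.cast_zero]

lemma Cb_of_neg {a b : ℤ} (hb : b < 0) : Cb a b = 0 := if_neg (by omega)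

lemma Cb_of_lt {a b : ℤ} (h : a < b) : Cb a b = 0 := if_neg (by omega)

lemma Cb_pascal {a b : ℤ} (hb : b ≠ 0) : Cb a b = Cb (a - 1) b + Cb (a - 1) (b - 1) := by
  rcases lt_or_gt_of_ne hb with hb | hb
  · rw [Cb_of_neg hb, Cb_of_neg hb, Cb_of_neg (by omega), add_zero]
  by_cases ha : a ≤ 0
  · rw [Cb_of_lt (by omega), Cb_of_lt (by omega), Cb_of_lt (by omega), add_zero]
  obtain ⟨a, rfl⟩ : ∃ a' : ℕ, a = a' + 1 := ⟨(a - 1).toNat, by omega⟩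
  obtain ⟨b, rfl⟩ : ∃ b' : ℕ, b = b' + 1 := ⟨(b - 1).toNat, by omega⟩
  simp only [add_sub_cancel_right]
  rw [← Nat.cast_succ, ← Nat.cast_succ, Cb_natCast, Cb_natCast, Cb_natCast,
    Nat.choose_succ_succ', Nat.cast_add, add_comm]

lemma Cb_succ_right_eq (m t : ℤ) : Cb m (t + 1) * (t + 1) = Cb m t * (m - t) := by
  by_cases ht : t < 0
  · rw [Cb_of_neg ht, zero_mul]
    rcases (by omega : t + 1 < 0 ∨ t + 1 = 0) with h | h
    · rw [Cb_of_neg h, zero_mul]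
    · rw [← Int.cast_one (R := ℝ), ← Int.cast_add, h, Int.cast_zero, mul_zero]
  by_cases hm : m ≤ t
  · rw [Cb_of_lt (by omega)]
    rcases hm.lt_or_eq with h | rfl
    · rw [Cb_of_lt h]; ring
    · ring
  obtain ⟨t, rfl⟩ := Int.eq_ofNat_of_zero_le (not_lt.mp ht)
  obtain ⟨m, rfl⟩ := Int.eq_ofNat_of_zero_le (by omega : (0 : ℤ) ≤ m)
  have htm : t ≤ m := by omega
  rw [← Nat.cast_succ, Cb_natCast, Cb_natCast]
  push_cast
  rw [← Nat.cast_sub htm]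
  exact_mod_cast Nat.choose_succ_right_eq m t

noncomputable def truncVandermonde (A B m : ℤ) (p : ℕ) : ℝ :=
  ∑ j ∈ range p, Cb A j * Cb B (m - j)

lemma Cb_mul_Cb_split (A B m j : ℤ) :
    ((A : ℝ) + B + 1 - m) * (Cb A j * Cb B (m - 1 - j))
      = (j + 1) * Cb A (j + 1) * Cb B (m - (j + 1)) + (m - j) * (Cb A j * Cb B (m - j)) := by
  have hA := Cb_succ_right_eq A j
  have hB := Cb_succ_right_eq B (m - 1 - j)
  rw [show m - 1 - j + 1 = m - j by ring] at hB
  rw [show m - (j + 1) = m - 1 - j by ring]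
  push_cast at hA hB ⊢
  linear_combination -Cb B (m - 1 - j) * hA - Cb A j * hB

lemma truncVandermonde_succ_mul (A B m : ℤ) (p : ℕ) :
    (p : ℝ) * truncVandermonde A B m (p + 1)
      = ((A : ℝ) + B + 1 - m) * truncVandermonde A B (m - 1) p
        - (m - p) * truncVandermonde A B m p := by
  set g : ℕ → ℝ := fun j => Cb A j * Cb B (m - j)
  have hsplit : ((A : ℝ) + B + 1 - m) * truncVandermonde A B (m - 1) p
      = ∑ j ∈ range (p + 1), j * g j + ∑ j ∈ range p, (m - j) * g j := by
    rw [truncVandermonde, mul_sum, sum_range_succ']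
    simp only [Cb_mul_Cb_split, sum_add_distrib, g]
    push_cast
    simp only [zero_mul, add_zero]
    congr 1
    refine sum_congr rfl fun j _ => ?_
    ring_nf
  have hcoeff : ∑ j ∈ range p, (p : ℝ) * g j
      = ∑ j ∈ range p, (j * g j + (m - j) * g j - (m - p) * g j) :=
    sum_congr rfl fun j _ => by ring
  rw [hsplit, truncVandermonde, truncVandermonde, mul_sum, mul_sum, sum_range_succ _ p,
    sum_range_succ _ p, hcoeff, sum_sub_distrib, sum_add_distrib]
  ring

lemma d_add_two (n k p y : ℕ) :
    d n k (p + 2) y = k * y ! * (n - (p + 2) - y)! / ((p + 2) * (p + 1) * n !)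
      * truncVandermonde (k - 1) (n - k) (y + p + 1) (p + 1) := by
  simp only [d, add_eq_zero, OfNat.ofNat_ne_zero, and_false, if_false,
    show p + 2 ≠ 1 by omega, show p + 2 - 1 = p + 1 by omega, truncVandermonde]
  push_cast
  ring_nf

lemma d_one_eq_sub (n k y : ℕ) (hk : 1 ≤ k) : d n k 1 y = d n k 0 y - d n k 0 (y + 1) := by
  simp only [d, if_true, one_ne_zero, if_false, sum_Icc_succ_top (by omega : 1 ≤ y + 1)]
  rw [Cb_pascal (a := (n : ℤ) - y - 1) (b := k) (by omega),
    show (n : ℤ) - (y + 1 : ℕ) - 1 = n - y - 1 - 1 by push_cast; ring]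
  have hy : (y : ℝ) + 1 ≠ 0 := by positivity
  push_cast
  field_simp
  ring

lemma two_mul_d_two (n k y : ℕ) (hk : 1 ≤ k) (hn : y + 2 ≤ n) :
    2 * d n k 2 y = d n k 1 y - d n k 1 (y + 1) := by
  simp only [d, OfNat.ofNat_ne_zero, if_false, show (2 : ℕ) ≠ 1 by omega, one_ne_zero, if_true,
    sum_Icc_succ_top (by omega : 1 ≤ y + 1)]
  rw [show (2 - 1 : ℕ) = 1 from rfl, sum_range_one, Cb_natCast]
  push_cast
  rw [show Cb ((k : ℤ) - 1) 0 = 1 by simp [Cb]; omega]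
  rcases lt_or_ge n (k + y + 1) with hlt | hle
  · rw [Cb_of_lt (by omega), Cb_of_lt (by omega)]
    ring
  have hA : Cb ((n : ℤ) - k) (y + 1) = (n - k)! / ((y + 1)! * (n - k - (y + 1))!) := by
    rw [show (n : ℤ) - k = (n - k : ℕ) by omega, show (y : ℤ) + 1 = (y + 1 : ℕ) by push_cast; ring,
      Cb_natCast, Nat.cast_choose ℝ (by omega)]
  have hB : Cb ((n : ℤ) - (y + 1) - 1) (k - 1)
      = (n - 2 - y)! / ((k - 1)! * (n - k - (y + 1))!) := by
    rw [show (n : ℤ) - (y + 1) - 1 = (n - 2 - y : ℕ) by omega,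
      show (k : ℤ) - 1 = (k - 1 : ℕ) by omega, Cb_natCast, Nat.cast_choose ℝ (by omega),
      show n - 2 - y - (k - 1) = n - k - (y + 1) by omega]
  have hkfact : (k ! : ℝ) = k * (k - 1)! := by
    rw [← Nat.mul_factorial_pred (by omega : k ≠ 0)]; push_cast; ring
  rw [show (y : ℤ) + 2 - 0 - 1 = y + 1 by ring, hA, hB, Nat.cast_choose ℝ (by omega : k ≤ n),
    Nat.factorial_succ, hkfact]
  have hfact : (n - k - (y + 1))! ≠ 0 := Nat.factorial_ne_zero _
  push_cast
  field_simp
  ring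

lemma d_add_three_rec (n k p y : ℕ) (hn : y + p + 3 ≤ n) :
    ((p : ℝ) + 3) * d n k (p + 3) y = d n k (p + 2) y - d n k (p + 2) (y + 1) := by
  obtain ⟨r, rfl⟩ : ∃ r, n = r + y + p + 3 := ⟨n - (y + p + 3), by omega⟩
  have hrec := truncVandermonde_succ_mul (k - 1) (r + y + p + 3 - k) (y + p + 2) (p + 1)
  rw [d_add_two, d_add_two, d_add_two,
    show (y : ℤ) + (p + 1 : ℕ) + 1 = y + p + 2 by push_cast; ring,
    show ((y + 1 : ℕ) : ℤ) + p + 1 = y + p + 2 by push_cast; ring,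
    show (y : ℤ) + p + 1 = y + p + 2 - 1 by ring,
    show r + y + p + 3 - (p + 1 + 2) - y = r by omega,
    show r + y + p + 3 - (p + 2) - y = r + 1 by omega,
    show r + y + p + 3 - (p + 2) - (y + 1) = r by omega,
    Nat.factorial_succ r, Nat.factorial_succ y]
  push_cast at hrec ⊢
  linear_combination (norm := skip)
    (k * y ! * r ! / ((p + 2) * (p + 1) * (r + y + p + 3 : ℕ)!) : ℝ) * hrec
  field_simp
  ring

lemma d_succ_eq_sub (n k l y : ℕ) (hk : 1 ≤ k) (hn : y + l + 1 ≤ n) :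
    ((l : ℝ) + 1) * d n k (l + 1) y = d n k l y - d n k l (y + 1) := by
  match l with
  | 0 => simpa using d_one_eq_sub n k y hk
  | 1 => simpa [one_add_one_eq_two] using two_mul_d_two n k y hk hn
  | p + 2 =>
    push_cast
    rw [show (p : ℝ) + 2 + 1 = p + 3 by ring]
    exact d_add_three_rec n k p y (by omega)

theorem c_rec_general (n k : ℕ) (hk : 1 ≤ k) :
    ∀ l ∈ Finset.Icc 1 k, ∀ x ∈ Finset.Icc (l + 1) n,
      (l : ℝ) * c n k l x = c n k (l - 1) (x - 1) - c n k (l - 1) x := by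
  intro l hl x hx
  obtain ⟨m, rfl⟩ : ∃ m, l = m + 1 := ⟨l - 1, by simp only [mem_Icc] at hl; omega⟩
  rw [mem_Icc] at hx
  simp only [c, Nat.add_sub_cancel, show x - 1 - m = x - (m + 1) by omega,
    show x - m = x - (m + 1) + 1 by omega]
  push_cast
  exact d_succ_eq_sub n k m (x - (m + 1)) hk (by omega)

theorem c_rec (n k : ℕ) (hk : 1 ≤ k) (hkn : k < n) :
    ∀ l ∈ Finset.Icc 1 k, ∀ x ∈ Finset.Icc (l + 1) n,
      (l : ℝ) * c n k l x = c n k (l - 1) (x - 1) - c n k (l - 1) x :=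
  c_rec_general n k hk

end Secretary
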